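/- arXiv:2011.11990 — 3 statements merged into one kernel-verified Lean document; each statement's English description precedes it below -/
import Mathlib

section
/- Weighted Klainerman–Sobolev estimate on hyperboloids. For every γ ≥ 0 there exists a constant C > 0 such that for every smooth function φ supported in the cone K and every s ≥ 2: sup_{(t,x) ∈ H_s} | s (t − r)^{−γ} φ(t, x) | ≤ C Σ_{|J| ≤ 2} ‖ (s/t) (t − r)^{−γ} L^J φ ‖_{L²_f(H_s)}, where the sum runs over all finite sequences J of indices in {1,2} of length at most 2. -/
/-!
On `H_s` use the flat coordinates `x = (a, b)`, in which `∂_a = L_1 / t` and `∂_b = L_2 / t`.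
Restricted to `H_s`, a function `u` supported in `K` has compact support in `x`, so integrating
`∂_b ∂_a (u²)` over `{|a| ≥ |a₀|, |b| ≥ |b₀|}` bounds `u(x₀)²`. The weight
`(t - r)^{-γ} = (s² / (t + r))^{-γ}` increases with `|a|` and `|b|`, so it can be moved inside that
integral. Writing `∂_b ∂_a (u²)` in terms of `u, L_1 u, L_2 u, L_2 L_1 u` (the term `b / t` that
comes from differentiating `1 / t` has modulus at most `1`) and applying Cauchy–Schwarz gives
the estimate with `C = 1`.
-/

noncomputable section

open MeasureTheory

/-- A point of `ℝ^{1+2}`; coordinate `0` is the time `t`, coordinates `1, 2` are spatial. -/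
abbrev Pt : Type := Fin 3 → ℝ

/-- The spatial radius `r = |x| = √((x¹)² + (x²)²)`. -/
def rad (p : Pt) : ℝ := Real.sqrt ((p 1)^2 + (p 2)^2)

/-- The coordinate partial derivative `∂_i` (with `∂_0 = ∂_t`). -/
def pd (i : Fin 3) (φ : Pt → ℝ) (p : Pt) : ℝ := fderiv ℝ φ p (Pi.single i 1)

/-- `−□φ = ∂_t²φ − ∂_1²φ − ∂_2²φ`. -/
def negBox (φ : Pt → ℝ) (p : Pt) : ℝ :=
  pd 0 (pd 0 φ) p - pd 1 (pd 1 φ) p - pd 2 (pd 2 φ) p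

/-- The Lorentz boost `L_a = x^a ∂_t + t ∂_a`, for `a ∈ {1,2}` (indexed by `Fin 2`,
with `a : Fin 2` corresponding to the spatial coordinate `a.succ`). -/
def boost (a : Fin 2) (φ : Pt → ℝ) (p : Pt) : ℝ :=
  p a.succ * pd 0 φ p + p 0 * pd a.succ φ p

/-- The semi-hyperboloidal derivative `∂̲_a = (x^a/t) ∂_t + ∂_a`, `a ∈ {1,2}` (indexed by `Fin 2`). -/
def ubd (a : Fin 2) (φ : Pt → ℝ) (p : Pt) : ℝ :=
  (p a.succ / p 0) * pd 0 φ p + pd a.succ φ p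

/-- `∂̲_β` for `β ∈ {0,1,2}`, with `∂̲_0 = ∂_t`. -/
def ubar (β : Fin 3) (φ : Pt → ℝ) (p : Pt) : ℝ :=
  if β = 0 then pd 0 φ p else (p β / p 0) * pd 0 φ p + pd β φ p

/-- Iterated coordinate derivatives `∂^I`. -/
def pdSeq : List (Fin 3) → (Pt → ℝ) → Pt → ℝ
  | [], φ => φ
  | i :: I, φ => pd i (pdSeq I φ)

/-- Iterated boosts `L^J`. -/
def boostSeq : List (Fin 2) → (Pt → ℝ) → Pt → ℝ
  | [], φ => φ
  | a :: J, φ => boost a (boostSeq J φ)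

/-- The interior of the light cone, `K = {(t,x) : r < t − 1}`. -/
def coneK : Set Pt := {p | rad p < p 0 - 1}

/-- The slab `K_{[s0,s1]} = {(t,x) ∈ K : s0² ≤ t² − r² ≤ s1²}`. -/
def slab (s0 s1 : ℝ) : Set Pt :=
  {p | rad p < p 0 - 1 ∧ s0^2 ≤ (p 0)^2 - (rad p)^2 ∧ (p 0)^2 - (rad p)^2 ≤ s1^2}

/-- The parametrization `x ↦ (√(s² + |x|²), x)` of the hyperboloid `H_s`. -/
def hyp (s : ℝ) (x : Fin 2 → ℝ) : Pt :=
  ![Real.sqrt (s^2 + (x 0)^2 + (x 1)^2), x 0, x 1]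

/-- The flat `L²` norm on the hyperboloid `H_s`. -/
def L2f (s : ℝ) (g : Pt → ℝ) : ℝ :=
  Real.sqrt (∫ x : Fin 2 → ℝ, (g (hyp s x))^2)

/-- `φ` vanishes near the conical boundary `∂K_{[s0,s1]}` (i.e. on a neighbourhood of
`r = t − 1` within the slab, in particular outside the cone on the slab). -/
def VanishNearBdry (s0 s1 : ℝ) (φ : Pt → ℝ) : Prop :=
  ∃ ε > (0:ℝ), ∀ p : Pt, 0 < p 0 → s0^2 ≤ (p 0)^2 - (rad p)^2 →
    (p 0)^2 - (rad p)^2 ≤ s1^2 → p 0 - 1 - ε < rad p → φ p = 0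

/-- The hyperboloidal energy functional `E_m(s, φ)`. -/
def energyE (m s : ℝ) (φ : Pt → ℝ) : ℝ :=
  ∫ x : Fin 2 → ℝ,
    ((pd 0 φ (hyp s x))^2 + (pd 1 φ (hyp s x))^2 + (pd 2 φ (hyp s x))^2
      + 2 * (hyp s x 1 / hyp s x 0) * pd 0 φ (hyp s x) * pd 1 φ (hyp s x)
      + 2 * (hyp s x 2 / hyp s x 0) * pd 0 φ (hyp s x) * pd 2 φ (hyp s x)
      + m^2 * (φ (hyp s x))^2)

/-- The weighted inverted time translation `Kφ = (t + r²/t) ∂_t φ + 2 x^a ∂_a φ`. -/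
def Kvf (φ : Pt → ℝ) (p : Pt) : ℝ :=
  (p 0 + (rad p)^2 / p 0) * pd 0 φ p + 2 * (p 1 * pd 1 φ p + p 2 * pd 2 φ p)

/-- The conformal energy `E_con(s, φ)`. -/
def Econ (s : ℝ) (φ : Pt → ℝ) : ℝ :=
  ∫ x : Fin 2 → ℝ,
    ((s * ubd 0 φ (hyp s x))^2 + (s * ubd 1 φ (hyp s x))^2
      + (Kvf φ (hyp s x) + φ (hyp s x))^2)

open Set Filter
open scoped ContDiff Topology

theorem HasCompactSupport.comp_prodMk_left {X Y β : Type*} [TopologicalSpace X]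
    [TopologicalSpace Y] [T2Space X] [T2Space Y] [Zero β] {f : X × Y → β}
    (hf : HasCompactSupport f) (y : Y) :
    HasCompactSupport fun x => f (x, y) :=
  hf.comp_isClosedEmbedding <|
    (show Function.LeftInverse Prod.fst fun x : X => (x, y) from fun _ => rfl).isClosedEmbedding
      continuous_fst (Continuous.prodMk_left y)

theorem HasCompactSupport.comp_prodMk_right {X Y β : Type*} [TopologicalSpace X]
    [TopologicalSpace Y] [T2Space X] [T2Space Y] [Zero β] {f : X × Y → β}
    (hf : HasCompactSupport f) (x : X) :
    HasCompactSupport fun y => f (x, y) :=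
  hf.comp_isClosedEmbedding <|
    (show Function.LeftInverse Prod.snd fun y : Y => (x, y) from fun _ => rfl).isClosedEmbedding
      continuous_snd (Continuous.prodMk_right x)

theorem abs_le_setIntegral_abs_deriv {h h' : ℝ → ℝ} (hd : ∀ x, HasDerivAt h (h' x) x)
    (hh' : Integrable h') (hh : HasCompactSupport h) (c : ℝ) :
    |h c| ≤ ∫ y in {y | |c| ≤ |y|}, |h' y| := by
  have hmono : ∀ I : Set ℝ, I ⊆ {y | |c| ≤ |y|} →
      ∫ y in I, |h' y| ≤ ∫ y in {y | |c| ≤ |y|}, |h' y| :=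
    fun I hI => setIntegral_mono_set hh'.abs.integrableOn
      (Eventually.of_forall fun _ => abs_nonneg _) (Eventually.of_forall hI)
  rcases le_or_gt 0 c with hc | hc
  · have hI : ∫ x in Ioi c, h' x = 0 - h c :=
      integral_Ioi_of_hasDerivAt_of_tendsto' (fun x _ => hd x) hh'.integrableOn
        (hh.is_zero_at_infty.mono_left atTop_le_cocompact)
    calc |h c| = |∫ x in Ioi c, h' x| := by rw [hI, zero_sub, abs_neg]
      _ ≤ ∫ x in Ioi c, |h' x| := abs_integral_le_integral_abs
      _ ≤ _ := hmono _ fun y (hy : c < y) => by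
          rw [mem_ofPred_eq, abs_of_nonneg hc, abs_of_pos (hc.trans_lt hy)]; exact hy.le
  · have hI : ∫ x in Iic c, h' x = h c - 0 :=
      integral_Iic_of_hasDerivAt_of_tendsto' (fun x _ => hd x) hh'.integrableOn
        (hh.is_zero_at_infty.mono_left atBot_le_cocompact)
    calc |h c| = |∫ x in Iic c, h' x| := by rw [hI, sub_zero]
      _ ≤ ∫ x in Iic c, |h' x| := abs_integral_le_integral_abs
      _ ≤ _ := hmono _ fun y (hy : y ≤ c) => by
          rw [mem_ofPred_eq, abs_of_neg hc, abs_of_neg (hy.trans_lt hc)]; linarith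

theorem abs_le_setIntegral_abs_mixedDeriv {G G₁ G₁₂ : ℝ × ℝ → ℝ}
    (h₁ : ∀ a b, HasDerivAt (fun a' => G (a', b)) (G₁ (a, b)) a)
    (h₁₂ : ∀ a b, HasDerivAt (fun b' => G₁ (a, b')) (G₁₂ (a, b)) b)
    (hG : HasCompactSupport G) (hG₁ : Continuous G₁) (hG₁' : HasCompactSupport G₁)
    (hG₁₂ : Continuous G₁₂) (hG₁₂' : HasCompactSupport G₁₂) (z₀ : ℝ × ℝ) :
    |G z₀| ≤ ∫ z in {a | |z₀.1| ≤ |a|} ×ˢ {b | |z₀.2| ≤ |b|}, |G₁₂ z| := by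
  have hint : Integrable G₁₂ := hG₁₂.integrable_of_hasCompactSupport hG₁₂'
  have hinner : ∀ a, |G₁ (a, z₀.2)| ≤ ∫ b in {b | |z₀.2| ≤ |b|}, |G₁₂ (a, b)| :=
    fun a =>
    abs_le_setIntegral_abs_deriv (h₁₂ a)
      ((hG₁₂.comp (Continuous.prodMk_right a)).integrable_of_hasCompactSupport
        (hG₁₂'.comp_prodMk_right a)) (hG₁'.comp_prodMk_right a) z₀.2
  calc |G z₀| ≤ ∫ a in {a | |z₀.1| ≤ |a|}, |G₁ (a, z₀.2)| :=
        abs_le_setIntegral_abs_deriv (fun a => h₁ a z₀.2)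
          ((hG₁.comp (Continuous.prodMk_left z₀.2)).integrable_of_hasCompactSupport
            (hG₁'.comp_prodMk_left z₀.2)) (hG.comp_prodMk_left z₀.2) z₀.1
    _ ≤ ∫ a in {a | |z₀.1| ≤ |a|}, ∫ b in {b | |z₀.2| ≤ |b|}, |G₁₂ (a, b)| := by
        have hAB : IntegrableOn (fun z => |G₁₂ z|)
            ({a | |z₀.1| ≤ |a|} ×ˢ {b | |z₀.2| ≤ |b|}) := hint.abs.integrableOn
        rw [Measure.volume_eq_prod, IntegrableOn, ← Measure.prod_restrict] at hAB
        exact setIntegral_mono_on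
          ((hG₁.comp (Continuous.prodMk_left z₀.2)).integrable_of_hasCompactSupport
            (hG₁'.comp_prodMk_left z₀.2)).abs.integrableOn hAB.integral_prod_left
          (isClosed_le continuous_const continuous_abs).measurableSet fun a _ => hinner a
    _ = _ := by
        rw [Measure.volume_eq_prod, setIntegral_prod _ (hint.abs.integrableOn)]

theorem mul_abs_le_integral_mul_abs_mixedDeriv {G G₁ G₁₂ w : ℝ × ℝ → ℝ}
    (h₁ : ∀ a b, HasDerivAt (fun a' => G (a', b)) (G₁ (a, b)) a)
    (h₁₂ : ∀ a b, HasDerivAt (fun b' => G₁ (a, b')) (G₁₂ (a, b)) b)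
    (hG : HasCompactSupport G) (hG₁ : Continuous G₁) (hG₁' : HasCompactSupport G₁)
    (hG₁₂ : Continuous G₁₂) (hG₁₂' : HasCompactSupport G₁₂) (hw : Continuous w)
    (hw₀ : ∀ z, 0 ≤ w z) (z₀ : ℝ × ℝ)
    (hw_mono : ∀ z, |z₀.1| ≤ |z.1| → |z₀.2| ≤ |z.2| → w z₀ ≤ w z) :
    w z₀ * |G z₀| ≤ ∫ z, w z * |G₁₂ z| := by
  have hint : Integrable fun z => w z * |G₁₂ z| :=
    (hw.mul hG₁₂.abs).integrable_of_hasCompactSupport hG₁₂'.abs.mul_left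
  set Q := {a | |z₀.1| ≤ |a|} ×ˢ {b | |z₀.2| ≤ |b|}
  calc w z₀ * |G z₀| ≤ w z₀ * ∫ z in Q, |G₁₂ z| :=
        mul_le_mul_of_nonneg_left
          (abs_le_setIntegral_abs_mixedDeriv h₁ h₁₂ hG hG₁ hG₁' hG₁₂ hG₁₂' z₀) (hw₀ z₀)
    _ = ∫ z in Q, w z₀ * |G₁₂ z| := (integral_const_mul _ _).symm
    _ ≤ ∫ z in Q, w z * |G₁₂ z| :=
        setIntegral_mono_on
          ((hG₁₂.integrable_of_hasCompactSupport hG₁₂').abs.const_mul _).integrableOn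
          hint.integrableOn
          (((isClosed_le continuous_const continuous_abs).prod
            (isClosed_le continuous_const continuous_abs)).measurableSet)
          fun z hz => mul_le_mul_of_nonneg_right (hw_mono z hz.1 hz.2) (abs_nonneg _)
    _ ≤ ∫ z, w z * |G₁₂ z| :=
        setIntegral_le_integral hint (Eventually.of_forall fun z => by
          have := hw₀ z; positivity)

section CauchySchwarz

variable {α : Type*} [MeasurableSpace α] {μ : Measure α} {f g : α → ℝ}

theorem integrable_abs_mul_abs (hf : MemLp f 2 μ) (hg : MemLp g 2 μ) :
    Integrable (fun x => |f x| * |g x|) μ :=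
  (hf.integrable_mul hg).abs.congr (Eventually.of_forall fun _ => abs_mul _ _)

theorem integral_abs_mul_abs_le (hf : MemLp f 2 μ) (hg : MemLp g 2 μ) :
    ∫ x, |f x| * |g x| ∂μ ≤ √(∫ x, f x ^ 2 ∂μ) * √(∫ x, g x ^ 2 ∂μ) := by
  have h := integral_mul_norm_le_Lp_mul_Lq (p := 2) (q := 2) Real.HolderConjugate.two_two
    (by simpa using hf) (by simpa using hg)
  simpa only [Real.norm_eq_abs, Real.rpow_two, sq_abs, ← Real.sqrt_eq_rpow] using h

end CauchySchwarz

theorem sq_mul_abs_mixedDeriv_le {w T c u v₁ v₂ v₁₂ : ℝ} (hc : |c| ≤ 1) :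
    w ^ 2 * |2 * (v₁ * v₂ + u * v₁₂ - u * v₁ * c) / T ^ 2| ≤
      2 * (|w / T * v₁| * |w / T * v₂| + |w / T * u| * |w / T * v₁₂|
        + |w / T * u| * |w / T * v₁|) := by
  have key :
      |v₁ * v₂ + u * v₁₂ - u * v₁ * c| ≤ |v₁| * |v₂| + |u| * |v₁₂| + |u| * |v₁| := by
    calc _ ≤ |v₁ * v₂ + u * v₁₂| + |u * v₁ * c| := abs_sub _ _
      _ ≤ |v₁ * v₂| + |u * v₁₂| + |u * v₁| * 1 := by
          rw [abs_mul (u * v₁)]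
          gcongr
          exact abs_add_le _ _
      _ = _ := by simp only [abs_mul, mul_one]
  calc w ^ 2 * |2 * (v₁ * v₂ + u * v₁₂ - u * v₁ * c) / T ^ 2|
      = 2 * (w / T) ^ 2 * |v₁ * v₂ + u * v₁₂ - u * v₁ * c| := by
        rw [abs_div, abs_mul, abs_two, abs_of_nonneg (sq_nonneg T)]; ring
    _ ≤ 2 * (w / T) ^ 2 * (|v₁| * |v₂| + |u| * |v₁₂| + |u| * |v₁|) := by gcongr
    _ = _ := by simp only [abs_mul, ← sq_abs (w / T)]; ring

section Boost

theorem contDiff_pd {φ : Pt → ℝ} (hφ : ContDiff ℝ ∞ φ) (i : Fin 3) :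
    ContDiff ℝ ∞ (pd i φ) :=
  (hφ.fderiv_right le_rfl).clm_apply contDiff_const

theorem contDiff_boost {φ : Pt → ℝ} (hφ : ContDiff ℝ ∞ φ) (a : Fin 2) :
    ContDiff ℝ ∞ (boost a φ) :=
  ((contDiff_apply ℝ ℝ a.succ).mul (contDiff_pd hφ 0)).add
    ((contDiff_apply ℝ ℝ 0).mul (contDiff_pd hφ a.succ))

theorem pd_eqOn_zero {φ : Pt → ℝ} {U : Set Pt} (hU : IsOpen U) (hφ : EqOn φ 0 U)
    (i : Fin 3) : EqOn (pd i φ) 0 U := fun p hp => by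
  have : φ =ᶠ[𝓝 p] fun _ => 0 := eventually_of_mem (hU.mem_nhds hp) hφ
  simp [pd, this.fderiv_eq]

theorem boost_eqOn_zero {φ : Pt → ℝ} {U : Set Pt} (hU : IsOpen U) (hφ : EqOn φ 0 U)
    (a : Fin 2) : EqOn (boost a φ) 0 U := fun p hp => by
  simp [boost, pd_eqOn_zero hU hφ 0 hp, pd_eqOn_zero hU hφ a.succ hp]

theorem HasDerivAt.comp_pd {ψ : Pt → ℝ} {c : ℝ → Pt} {c' : Pt} {τ : ℝ}
    (hc : HasDerivAt c c' τ) (hψ : DifferentiableAt ℝ ψ (c τ)) :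
    HasDerivAt (fun τ => ψ (c τ)) (∑ i, c' i * pd i ψ (c τ)) τ := by
  refine (hψ.hasFDerivAt.comp_hasDerivAt τ hc).congr_deriv ?_
  conv_lhs => rw [← Finset.univ_sum_single c']
  simp only [map_sum, pd]
  refine Finset.sum_congr rfl fun i _ => ?_
  rw [← smul_eq_mul, ← map_smul, ← Pi.single_smul', smul_eq_mul, mul_one]

end Boost

def hypProd (s : ℝ) (z : ℝ × ℝ) : Pt := ![√(s ^ 2 + z.1 ^ 2 + z.2 ^ 2), z.1, z.2]

def coneExterior : Set Pt := {p | p 0 - 1 < rad p}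

theorem continuous_rad : Continuous rad := by
  unfold rad; fun_prop

section Hyperboloid

variable {s : ℝ}

theorem hyp_eq_hypProd (s : ℝ) (x : Fin 2 → ℝ) : hyp s x = hypProd s (x 0, x 1) := by
  ext i; fin_cases i <;> rfl

theorem eq_hypProd {p : Pt} (hp : 0 < p 0) (hps : p 0 ^ 2 - rad p ^ 2 = s ^ 2) :
    p = hypProd s (p 1, p 2) := by
  have hr : rad p ^ 2 = p 1 ^ 2 + p 2 ^ 2 := Real.sq_sqrt (by positivity)
  ext i; fin_cases i
  · show p 0 = √(s ^ 2 + p 1 ^ 2 + p 2 ^ 2)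
    rw [show s ^ 2 + p 1 ^ 2 + p 2 ^ 2 = p 0 ^ 2 by linarith, Real.sqrt_sq hp.le]
  all_goals rfl

theorem rad_hypProd (s : ℝ) (z : ℝ × ℝ) : rad (hypProd s z) = √(z.1 ^ 2 + z.2 ^ 2) := rfl

theorem hypProd_zero_eq (s : ℝ) (z : ℝ × ℝ) :
    hypProd s z 0 = √(s ^ 2 + rad (hypProd s z) ^ 2) := by
  rw [rad_hypProd, Real.sq_sqrt (by positivity), ← add_assoc]; rfl

theorem hypProd_zero_pos (hs : s ≠ 0) (z : ℝ × ℝ) : 0 < hypProd s z 0 :=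
  Real.sqrt_pos.2 (by positivity)

theorem rad_hypProd_lt (hs : s ≠ 0) (z : ℝ × ℝ) : rad (hypProd s z) < hypProd s z 0 := by
  rw [hypProd_zero_eq]
  exact Real.lt_sqrt_of_sq_lt (lt_add_of_pos_left _ (by positivity))

theorem abs_snd_le_hypProd_zero (s : ℝ) (z : ℝ × ℝ) : |z.2| ≤ hypProd s z 0 :=
  Real.abs_le_sqrt (by nlinarith [sq_nonneg s, sq_nonneg z.1])

theorem continuous_hypProd (s : ℝ) : Continuous (hypProd s) := by
  refine continuous_pi fun i => ?_
  fin_cases i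
  · exact (((continuous_const.add (continuous_fst.pow 2)).add (continuous_snd.pow 2))).sqrt
  · exact continuous_fst
  · exact continuous_snd

theorem hypProd_mem_coneExterior {z : ℝ × ℝ} (hz : s ^ 2 < ‖z‖) :
    hypProd s z ∈ coneExterior := by
  have hzr : ‖z‖ ≤ rad (hypProd s z) := by
    rw [Prod.norm_def, rad_hypProd]
    exact max_le (Real.abs_le_sqrt (by nlinarith [sq_nonneg z.2]))
      (Real.abs_le_sqrt (by nlinarith [sq_nonneg z.1]))
  by_contra h
  have h1 : rad (hypProd s z) + 1 ≤ hypProd s z 0 := by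
    simp only [coneExterior, mem_ofPred_eq, not_lt] at h; linarith
  have h2 := Real.sq_sqrt (by positivity : 0 ≤ s ^ 2 + rad (hypProd s z) ^ 2)
  rw [← hypProd_zero_eq] at h2
  nlinarith [norm_nonneg z]

theorem isOpen_coneExterior : IsOpen coneExterior :=
  isOpen_lt ((continuous_apply 0).sub continuous_const) continuous_rad

theorem hasCompactSupport_of_coneExterior {β : Type*} [Zero β] {F : ℝ × ℝ → β}
    (hF : ∀ z, hypProd s z ∈ coneExterior → F z = 0) : HasCompactSupport F :=
  HasCompactSupport.intro (isCompact_closedBall 0 (s ^ 2)) fun z hz =>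
    hF z (hypProd_mem_coneExterior (by simpa using hz))

end Hyperboloid

section ChainRule

variable {s : ℝ}

theorem hasDerivAt_hypProd_zero_fst (hs : s ≠ 0) (a b : ℝ) :
    HasDerivAt (fun a' => hypProd s (a', b) 0) (a / hypProd s (a, b) 0) a := by
  refine ((((hasDerivAt_pow 2 a).const_add (s ^ 2)).add_const (b ^ 2)).sqrt
    (by positivity)).congr_deriv ?_
  show _ = a / √(s ^ 2 + a ^ 2 + b ^ 2)
  push_cast; ring

theorem hasDerivAt_hypProd_zero_snd (hs : s ≠ 0) (a b : ℝ) :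
    HasDerivAt (fun b' => hypProd s (a, b') 0) (b / hypProd s (a, b) 0) b := by
  refine (((hasDerivAt_pow 2 b).const_add (s ^ 2 + a ^ 2)).sqrt
    (by positivity)).congr_deriv ?_
  show _ = b / √(s ^ 2 + a ^ 2 + b ^ 2)
  push_cast; ring

theorem hasDerivAt_comp_hypProd_fst (hs : s ≠ 0) {ψ : Pt → ℝ} (hψ : Differentiable ℝ ψ)
    (a b : ℝ) :
    HasDerivAt (fun a' => ψ (hypProd s (a', b)))
      (boost 0 ψ (hypProd s (a, b)) / hypProd s (a, b) 0) a := by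
  have hc : HasDerivAt (fun a' => hypProd s (a', b)) ![a / hypProd s (a, b) 0, 1, 0] a := by
    refine hasDerivAt_pi.2 fun i => ?_
    fin_cases i
    exacts [hasDerivAt_hypProd_zero_fst hs a b, hasDerivAt_id a, hasDerivAt_const a b]
  convert hc.comp_pd (hψ _) using 1
  have := (hypProd_zero_pos hs (a, b)).ne'
  simp only [boost, Fin.isValue, Fin.succ_zero_eq_one, Fin.sum_univ_three, Matrix.cons_val_zero,
    Matrix.cons_val_one, Matrix.cons_val, one_mul, zero_mul, add_zero]
  field_simp
  show a * _ + _ = _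
  ring

theorem hasDerivAt_comp_hypProd_snd (hs : s ≠ 0) {ψ : Pt → ℝ} (hψ : Differentiable ℝ ψ)
    (a b : ℝ) :
    HasDerivAt (fun b' => ψ (hypProd s (a, b')))
      (boost 1 ψ (hypProd s (a, b)) / hypProd s (a, b) 0) b := by
  have hc : HasDerivAt (fun b' => hypProd s (a, b')) ![b / hypProd s (a, b) 0, 0, 1] b := by
    refine hasDerivAt_pi.2 fun i => ?_
    fin_cases i
    exacts [hasDerivAt_hypProd_zero_snd hs a b, hasDerivAt_const b a, hasDerivAt_id b]
  convert hc.comp_pd (hψ _) using 1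
  have := (hypProd_zero_pos hs (a, b)).ne'
  simp only [boost, Fin.isValue, Fin.succ_one_eq_two, Fin.sum_univ_three, Matrix.cons_val_zero,
    Matrix.cons_val_one, Matrix.cons_val, one_mul, zero_mul, add_zero]
  field_simp
  show b * _ + _ = _
  ring

end ChainRule

def hypWeight (s γ : ℝ) (z : ℝ × ℝ) : ℝ := (hypProd s z 0 - rad (hypProd s z)) ^ (-γ)

section Weight

variable {s γ : ℝ}

theorem sqrt_sq_add_sq_sub_le {r r' : ℝ} (hr : 0 ≤ r) (hrr' : r ≤ r') :
    √(s ^ 2 + r' ^ 2) - r' ≤ √(s ^ 2 + r ^ 2) - r := by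
  have hq : r ≤ √(s ^ 2 + r ^ 2) := Real.le_sqrt_of_sq_le (by nlinarith)
  have hq2 := Real.sq_sqrt (by positivity : 0 ≤ s ^ 2 + r ^ 2)
  rw [sub_le_iff_le_add, sub_add_comm]
  exact Real.sqrt_le_iff.2
    ⟨by linarith, by nlinarith [mul_nonneg (sub_nonneg.2 hq) (sub_nonneg.2 hrr')]⟩

theorem hypWeight_pos (hs : s ≠ 0) (γ : ℝ) (z : ℝ × ℝ) : 0 < hypWeight s γ z :=
  Real.rpow_pos_of_pos (sub_pos.2 (rad_hypProd_lt hs z)) _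

theorem continuous_hypWeight (hs : s ≠ 0) (γ : ℝ) : Continuous (hypWeight s γ) := by
  refine Continuous.rpow_const ?_ fun z => Or.inl (sub_pos.2 (rad_hypProd_lt hs z)).ne'
  exact ((continuous_apply 0).comp (continuous_hypProd s)).sub
    (continuous_rad.comp (continuous_hypProd s))

theorem hypWeight_mono (hs : s ≠ 0) (hγ : 0 ≤ γ) {z z' : ℝ × ℝ} (h₁ : |z.1| ≤ |z'.1|)
    (h₂ : |z.2| ≤ |z'.2|) : hypWeight s γ z ≤ hypWeight s γ z' := by
  have hr : rad (hypProd s z) ≤ rad (hypProd s z') := by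
    rw [rad_hypProd, rad_hypProd]
    exact Real.sqrt_le_sqrt (add_le_add (sq_le_sq.2 h₁) (sq_le_sq.2 h₂))
  unfold hypWeight
  rw [hypProd_zero_eq s z, hypProd_zero_eq s z']
  refine Real.rpow_le_rpow_of_nonpos ?_ (sqrt_sq_add_sq_sub_le (Real.sqrt_nonneg _) hr)
    (neg_nonpos.2 hγ)
  rw [← hypProd_zero_eq]; exact sub_pos.2 (rad_hypProd_lt hs z')

end Weight

def hypTrace (s γ : ℝ) (ψ : Pt → ℝ) (z : ℝ × ℝ) : ℝ :=
  hypWeight s γ z / hypProd s z 0 * ψ (hypProd s z)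

def hypNorm (s γ : ℝ) (ψ : Pt → ℝ) : ℝ := √(∫ z, hypTrace s γ ψ z ^ 2)

section Trace

variable {s γ : ℝ} {ψ : Pt → ℝ}

theorem continuous_hypTrace (hs : s ≠ 0) (γ : ℝ) (hψ : Continuous ψ) :
    Continuous (hypTrace s γ ψ) :=
  ((continuous_hypWeight hs γ).div ((continuous_apply 0).comp (continuous_hypProd s))
    fun z => (hypProd_zero_pos hs z).ne').mul (hψ.comp (continuous_hypProd s))

theorem memLp_hypTrace (hs : s ≠ 0) (γ : ℝ) (hψ : Continuous ψ)
    (hψ₀ : EqOn ψ 0 coneExterior) : MemLp (hypTrace s γ ψ) 2 :=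
  (continuous_hypTrace hs γ hψ).memLp_of_hasCompactSupport
    (hasCompactSupport_of_coneExterior (s := s) fun z hz => by simp [hypTrace, hψ₀ hz])

theorem L2f_eq_mul_hypNorm (hs : 0 ≤ s) (γ : ℝ) (ψ : Pt → ℝ) :
    L2f s (fun q => s / q 0 * (q 0 - rad q) ^ (-γ) * ψ q) = s * hypNorm s γ ψ := by
  have h : ∀ x : Fin 2 → ℝ,
      (s / hyp s x 0 * (hyp s x 0 - rad (hyp s x)) ^ (-γ) * ψ (hyp s x)) ^ 2
        = s ^ 2 * hypTrace s γ ψ (MeasurableEquiv.piFinTwo (fun _ => ℝ) x) ^ 2 := fun x => by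
    rw [hyp_eq_hypProd]
    simp only [hypTrace, hypWeight, MeasurableEquiv.piFinTwo_apply]
    ring
  rw [L2f, integral_congr_ae (Eventually.of_forall h),
    (volume_preserving_piFinTwo fun _ => ℝ).integral_comp'
      (fun z => s ^ 2 * hypTrace s γ ψ z ^ 2),
    integral_const_mul, Real.sqrt_mul (sq_nonneg s), Real.sqrt_sq hs, hypNorm]

end Trace

/-- `∂_b ∂_a (u²)` for `u = ψ ∘ hypProd s`, using `∂_a = L_1 / t`, `∂_b = L_2 / t` on `H_s`. -/
def hypMixedDerivSq (s : ℝ) (ψ : Pt → ℝ) (z : ℝ × ℝ) : ℝ :=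
  2 * (boost 0 ψ (hypProd s z) * boost 1 ψ (hypProd s z)
      + ψ (hypProd s z) * boost 1 (boost 0 ψ) (hypProd s z)
      - ψ (hypProd s z) * boost 0 ψ (hypProd s z) * (z.2 / hypProd s z 0)) / hypProd s z 0 ^ 2

section MixedDeriv

variable {s γ : ℝ} {ψ : Pt → ℝ}

theorem hasDerivAt_sq_comp_hypProd_fst (hs : s ≠ 0) (hψ : Differentiable ℝ ψ) (a b : ℝ) :
    HasDerivAt (fun a' => ψ (hypProd s (a', b)) * ψ (hypProd s (a', b)))
      (2 * ψ (hypProd s (a, b)) * (boost 0 ψ (hypProd s (a, b)) / hypProd s (a, b) 0)) a := by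
  have h := hasDerivAt_comp_hypProd_fst hs hψ a b
  exact (h.fun_mul h).congr_deriv (by ring)

theorem hasDerivAt_hypMixedDerivSq (hs : s ≠ 0) (hψ : Differentiable ℝ ψ)
    (hψ₁ : Differentiable ℝ (boost 0 ψ)) (a b : ℝ) :
    HasDerivAt
      (fun b' => 2 * ψ (hypProd s (a, b')) * (boost 0 ψ (hypProd s (a, b')) / hypProd s (a, b') 0))
      (hypMixedDerivSq s ψ (a, b)) b := by
  refine (((hasDerivAt_comp_hypProd_snd hs hψ a b).const_mul 2).fun_mul
    ((hasDerivAt_comp_hypProd_snd hs hψ₁ a b).fun_div (hasDerivAt_hypProd_zero_snd hs a b)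
      (hypProd_zero_pos hs (a, b)).ne')).congr_deriv ?_
  have := (hypProd_zero_pos hs (a, b)).ne'
  rw [hypMixedDerivSq]
  field_simp
  ring

theorem continuous_hypMixedDerivSq (hs : s ≠ 0) (hψ : ContDiff ℝ ∞ ψ) :
    Continuous (hypMixedDerivSq s ψ) := by
  have hT := (continuous_apply 0).comp (continuous_hypProd s)
  have hT₀ : ∀ z, hypProd s z 0 ≠ 0 := fun z => (hypProd_zero_pos hs z).ne'
  have hu : ∀ {φ : Pt → ℝ}, ContDiff ℝ ∞ φ → Continuous fun z => φ (hypProd s z) :=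
    fun hφ => hφ.continuous.comp (continuous_hypProd s)
  have hψ₁ := contDiff_boost hψ 0
  exact (continuous_const.mul ((((hu hψ₁).mul (hu (contDiff_boost hψ 1))).add
    ((hu hψ).mul (hu (contDiff_boost hψ₁ 1)))).sub
      (((hu hψ).mul (hu hψ₁)).mul (continuous_snd.div hT hT₀)))).div (hT.pow 2)
    fun z => pow_ne_zero 2 (hT₀ z)

theorem sq_hypWeight_mul_abs_hypMixedDerivSq_le (z : ℝ × ℝ) :
    hypWeight s γ z ^ 2 * |hypMixedDerivSq s ψ z| ≤
      2 * (|hypTrace s γ (boost 0 ψ) z| * |hypTrace s γ (boost 1 ψ) z|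
        + |hypTrace s γ ψ z| * |hypTrace s γ (boost 1 (boost 0 ψ)) z|
        + |hypTrace s γ ψ z| * |hypTrace s γ (boost 0 ψ) z|) := by
  refine sq_mul_abs_mixedDeriv_le ?_
  rw [abs_div]
  exact div_le_one_of_le₀ ((abs_snd_le_hypProd_zero s z).trans (le_abs_self _)) (abs_nonneg _)

theorem integrable_hypWeight_sq_mul_abs_hypMixedDerivSq (hs : s ≠ 0) (γ : ℝ)
    (hψ : ContDiff ℝ ∞ ψ) (hψ₀ : EqOn ψ 0 coneExterior) :
    Integrable fun z => hypWeight s γ z ^ 2 * |hypMixedDerivSq s ψ z| :=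
  (((continuous_hypWeight hs γ).pow 2).mul
    (continuous_hypMixedDerivSq hs hψ).abs).integrable_of_hasCompactSupport
    (hasCompactSupport_of_coneExterior (s := s) fun z hz => by
      simp [hypMixedDerivSq, hψ₀ hz, boost_eqOn_zero isOpen_coneExterior hψ₀ 0 hz])

end MixedDeriv

section Estimate

variable {s γ : ℝ} {ψ : Pt → ℝ}

theorem sq_hypWeight_mul_le_integral (hs : s ≠ 0) (hγ : 0 ≤ γ) (hψ : ContDiff ℝ ∞ ψ)
    (hψ₀ : EqOn ψ 0 coneExterior) (z₀ : ℝ × ℝ) :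
    (hypWeight s γ z₀ * ψ (hypProd s z₀)) ^ 2 ≤
      ∫ z, hypWeight s γ z ^ 2 * |hypMixedDerivSq s ψ z| := by
  have hψ₁ := contDiff_boost hψ 0
  have hψ₁₀ := boost_eqOn_zero isOpen_coneExterior hψ₀ 0
  have hcs : ∀ {F : ℝ × ℝ → ℝ}, (∀ z, ψ (hypProd s z) = 0 → boost 0 ψ (hypProd s z) = 0 →
      F z = 0) → HasCompactSupport F :=
    fun hF => hasCompactSupport_of_coneExterior fun z hz => hF z (hψ₀ hz) (hψ₁₀ hz)
  have hT := (continuous_apply 0).comp (continuous_hypProd s)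
  have h := mul_abs_le_integral_mul_abs_mixedDeriv
    (G := fun z => ψ (hypProd s z) * ψ (hypProd s z))
    (G₁ := fun z => 2 * ψ (hypProd s z) * (boost 0 ψ (hypProd s z) / hypProd s z 0))
    (hasDerivAt_sq_comp_hypProd_fst hs (hψ.differentiable (by simp)))
    (hasDerivAt_hypMixedDerivSq hs (hψ.differentiable (by simp)) (hψ₁.differentiable (by simp)))
    (hcs fun z h _ => by simp [h])
    ((continuous_const.mul (hψ.continuous.comp (continuous_hypProd s))).mul
      ((hψ₁.continuous.comp (continuous_hypProd s)).div hT fun z => (hypProd_zero_pos hs z).ne'))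
    (hcs fun z h _ => by simp [h]) (continuous_hypMixedDerivSq hs hψ)
    (hcs fun z h h₁ => by simp [hypMixedDerivSq, h, h₁]) ((continuous_hypWeight hs γ).pow 2)
    (fun z => sq_nonneg _) z₀
    fun z h₁ h₂ => pow_le_pow_left₀ (hypWeight_pos hs γ z₀).le (hypWeight_mono hs hγ h₁ h₂) _
  rw [abs_mul_self, ← sq] at h
  simpa only [Pi.pow_apply, mul_pow] using h

theorem hypWeight_mul_abs_le (hs : s ≠ 0) (hγ : 0 ≤ γ) (hψ : ContDiff ℝ ∞ ψ)
    (hψ₀ : EqOn ψ 0 coneExterior) (z₀ : ℝ × ℝ) :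
    hypWeight s γ z₀ * |ψ (hypProd s z₀)| ≤ hypNorm s γ ψ + hypNorm s γ (boost 0 ψ)
      + hypNorm s γ (boost 1 ψ) + hypNorm s γ (boost 1 (boost 0 ψ)) := by
  have hU := isOpen_coneExterior
  have hψ₁₀ := boost_eqOn_zero hU hψ₀ 0
  have h₀ := memLp_hypTrace hs γ hψ.continuous hψ₀
  have h₁ := memLp_hypTrace hs γ (contDiff_boost hψ 0).continuous hψ₁₀
  have h₂ := memLp_hypTrace hs γ (contDiff_boost hψ 1).continuous (boost_eqOn_zero hU hψ₀ 1)
  have h₂₁ := memLp_hypTrace hs γ (contDiff_boost (contDiff_boost hψ 0) 1).continuous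
    (boost_eqOn_zero hU hψ₁₀ 1)
  have h12 := integrable_abs_mul_abs h₁ h₂
  have h021 := integrable_abs_mul_abs h₀ h₂₁
  have h01 := integrable_abs_mul_abs h₀ h₁
  have h := (sq_hypWeight_mul_le_integral hs hγ hψ hψ₀ z₀).trans <|
    integral_mono (integrable_hypWeight_sq_mul_abs_hypMixedDerivSq hs γ hψ hψ₀)
      (((h12.fun_add h021).fun_add h01).const_mul 2) sq_hypWeight_mul_abs_hypMixedDerivSq_le
  rw [integral_const_mul, integral_add (h12.fun_add h021) h01, integral_add h12 h021] at h
  have c₁₂ : _ ≤ hypNorm s γ (boost 0 ψ) * hypNorm s γ (boost 1 ψ) :=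
    integral_abs_mul_abs_le h₁ h₂
  have c₀₂₁ : _ ≤ hypNorm s γ ψ * hypNorm s γ (boost 1 (boost 0 ψ)) :=
    integral_abs_mul_abs_le h₀ h₂₁
  have c₀₁ : _ ≤ hypNorm s γ ψ * hypNorm s γ (boost 0 ψ) := integral_abs_mul_abs_le h₀ h₁
  have hN : ∀ φ, 0 ≤ hypNorm s γ φ := fun _ => Real.sqrt_nonneg _
  have := hN ψ; have := hN (boost 0 ψ); have := hN (boost 1 ψ); have := hN (boost 1 (boost 0 ψ))
  rw [← abs_of_pos (hypWeight_pos hs γ z₀), ← abs_mul]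
  refine abs_le_of_sq_le_sq (h.trans ?_) (by positivity)
  nlinarith

end Estimate

/-- **Weighted Klainerman–Sobolev estimate on hyperboloids** (estimate (4.17)). For `γ ≥ 0`,
smooth `φ` supported in the cone `K` and `s ≥ 2`:
`sup_{H_s} |s (t−r)^{−γ} φ| ≤ C Σ_{|J|≤2} ‖(s/t)(t−r)^{−γ} L^J φ‖_{L²_f(H_s)}`. -/
theorem weighted_klainerman_sobolev_hyperboloid (γ : ℝ) (hγ : 0 ≤ γ) :
    ∃ C : ℝ, 0 < C ∧
      ∀ φ : Pt → ℝ, ContDiff ℝ (⊤ : ℕ∞) φ → (∀ p, p ∉ coneK → φ p = 0) →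
      ∀ s : ℝ, 2 ≤ s →
      ∀ p : Pt, 0 < p 0 → (p 0)^2 - (rad p)^2 = s^2 →
        |s * (p 0 - rad p) ^ (-γ) * φ p|
          ≤ C * (L2f s (fun q => (s / q 0) * (q 0 - rad q) ^ (-γ) * φ q)
              + (∑ a : Fin 2, L2f s (fun q => (s / q 0) * (q 0 - rad q) ^ (-γ) * boost a φ q))
              + ∑ a : Fin 2, ∑ b : Fin 2,
                  L2f s (fun q => (s / q 0) * (q 0 - rad q) ^ (-γ) * boost a (boost b φ) q)) := by
  refine ⟨1, one_pos, fun φ hφ hφK s hs p hp hps => ?_⟩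
  have hs₀ : 0 < s := by linarith
  obtain ⟨z, rfl⟩ : ∃ z, p = hypProd s z := ⟨_, eq_hypProd hp hps⟩
  have hφ₀ : EqOn φ 0 coneExterior := fun q (hq : q 0 - 1 < rad q) => hφK q (not_lt.2 hq.le)
  have hN : ∀ ψ, 0 ≤ s * hypNorm s γ ψ := fun _ => mul_nonneg hs₀.le (Real.sqrt_nonneg _)
  have h := hypWeight_mul_abs_le hs₀.ne' hγ hφ hφ₀ z
  change |s * hypWeight s γ z * φ (hypProd s z)| ≤ _
  rw [abs_mul, abs_mul, abs_of_pos hs₀, abs_of_pos (hypWeight_pos hs₀.ne' γ z), mul_assoc]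
  simp only [Fin.sum_univ_two, L2f_eq_mul_hypNorm hs₀.le]
  nlinarith [hN (boost 0 (boost 0 φ)), hN (boost 0 (boost 1 φ)), hN (boost 1 (boost 1 φ))]
end
end

section
/- Pointwise bound on second derivatives of a wave field. There exists a universal constant C > 0 such that if φ is a C² function supported in K_{[s₀, s₁]}, vanishing near the conical boundary ∂K, and satisfying −□φ = f there, then for all α, β ∈ {0,1,2} and all (t,x) ∈ K_{[s₀, s₁]}: |∂_α ∂_β φ(t,x)| ≤ C [ (t − |x|)^{−1} ( Σ_{a ∈ {1,2}, γ ∈ {0,1,2}} |∂_γ L_a φ| + Σ_{γ ∈ {0,1,2}} |∂_γ φ| ) + t (t − |x|)^{−1} |f| ]. -/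
noncomputable section

open MeasureTheory

/-! At a point with `r < t` everything is linear algebra on the second-order jet of `φ`.
Differentiating `L_a φ = x^a ∂_tφ + t ∂_aφ` gives
`t ∂_a∂_βφ = ∂_β L_aφ − x^a ∂_β∂_tφ − (first-order terms)`, which trades a spatial derivative
for a time derivative at the price `|x^a|/t ≤ r/t`. Feeding this twice into `t² (−□φ)` yields
`(t² − r²) ∂_t²φ = t² f + O(t S)`, where `S = Σ|∂_γ L_aφ| + Σ|∂_γφ|`; since `t² − r² ≥ t (t − r)`,
this bounds `∂_t²φ` by `2Q` with `Q = (t − r)⁻¹ (S + t |f|)`. The same identity then bounds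
`∂_t∂_aφ` by `3Q` and `∂_a∂_bφ` by `4Q`. -/

lemma abs_le_add_one_mul_of_mul_eq_sub {t u X c v k Q : ℝ} (ht : 0 < t)
    (h : t * u = X - c * v) (hc : |c| ≤ t) (hX : |X| ≤ t * Q) (hv : |v| ≤ k * Q) :
    |u| ≤ (k + 1) * Q := by
  have hcv : |c * v| ≤ t * (k * Q) := by
    rw [abs_mul]
    exact mul_le_mul hc hv (abs_nonneg v) ht.le
  have htu : t * |u| ≤ t * ((k + 1) * Q) := by
    calc t * |u| = |X - c * v| := by rw [← h, abs_mul, abs_of_pos ht]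
      _ ≤ |X| + |c * v| := abs_sub _ _
      _ ≤ t * ((k + 1) * Q) := by linarith
  exact le_of_mul_le_mul_left htu ht

lemma rad_nonneg (p : Pt) : 0 ≤ rad p :=
  Real.sqrt_nonneg _

lemma rad_sq (p : Pt) : rad p ^ 2 = p 1 ^ 2 + p 2 ^ 2 :=
  Real.sq_sqrt (by positivity)

lemma abs_le_rad (p : Pt) (a : Fin 2) : |p a.succ| ≤ rad p := by
  rw [rad, ← Real.sqrt_sq_eq_abs]
  refine Real.sqrt_le_sqrt ?_
  fin_cases a <;> simp [sq_nonneg]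

lemma abs_mul_add_mul_le {x y u v r : ℝ} (hx : |x| ≤ r) (hy : |y| ≤ r) :
    |x * u + y * v| ≤ r * (|u| + |v|) := by
  calc |x * u + y * v| ≤ |x| * |u| + |y| * |v| := by
        rw [← abs_mul, ← abs_mul]; exact abs_add_le _ _
    _ ≤ r * |u| + r * |v| := by gcongr
    _ = r * (|u| + |v|) := by ring

section Calculus

variable {φ : Pt → ℝ}

lemma hasFDerivAt_pd (hφ : ContDiff ℝ 2 φ) (β : Fin 3) (p : Pt) :
    HasFDerivAt (pd β φ)
      ((ContinuousLinearMap.apply ℝ ℝ (Pi.single β (1 : ℝ))).comp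
        (fderiv ℝ (fderiv ℝ φ) p)) p := by
  have hφ' : DifferentiableAt ℝ (fderiv ℝ φ) p :=
    (hφ.fderiv_right (m := 1) le_rfl).differentiable one_ne_zero p
  exact (ContinuousLinearMap.apply ℝ ℝ (Pi.single β (1 : ℝ))).hasFDerivAt.comp p hφ'.hasFDerivAt

lemma pd_pd_eq_fderiv_fderiv (hφ : ContDiff ℝ 2 φ) (α β : Fin 3) (p : Pt) :
    pd α (pd β φ) p = fderiv ℝ (fderiv ℝ φ) p (Pi.single α 1) (Pi.single β 1) := by
  simp only [pd, (hasFDerivAt_pd hφ β p).fderiv]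
  rfl

lemma pd_pd_comm (hφ : ContDiff ℝ 2 φ) (α β : Fin 3) (p : Pt) :
    pd α (pd β φ) p = pd β (pd α φ) p := by
  rw [pd_pd_eq_fderiv_fderiv hφ, pd_pd_eq_fderiv_fderiv hφ]
  exact hφ.contDiffAt.isSymmSndFDerivAt (by simp [minSmoothness_of_isRCLikeNormedField]) _ _

lemma pd_boost (hφ : ContDiff ℝ 2 φ) (a : Fin 2) (γ : Fin 3) (p : Pt) :
    pd γ (boost a φ) p
      = (Pi.single γ 1 : Pt) a.succ * pd 0 φ p + p a.succ * pd γ (pd 0 φ) p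
        + ((Pi.single γ 1 : Pt) 0 * pd a.succ φ p + p 0 * pd γ (pd a.succ φ) p) := by
  have h := ((hasFDerivAt_apply a.succ p).mul (hasFDerivAt_pd hφ 0 p)).add
    ((hasFDerivAt_apply 0 p).mul (hasFDerivAt_pd hφ a.succ p))
  change fderiv ℝ ((fun q : Pt ↦ q a.succ) * pd 0 φ + (fun q : Pt ↦ q 0) * pd a.succ φ) p
    (Pi.single γ 1) = _
  rw [h.fderiv]
  simp [← pd_pd_eq_fderiv_fderiv hφ]
  ring

lemma mul_pd_succ_pd (hφ : ContDiff ℝ 2 φ) (a : Fin 2) (β : Fin 3) (p : Pt) :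
    p 0 * pd a.succ (pd β φ) p
      = (pd β (boost a φ) p
          - ((Pi.single β 1 : Pt) a.succ * pd 0 φ p + (Pi.single β 1 : Pt) 0 * pd a.succ φ p))
        - p a.succ * pd 0 (pd β φ) p := by
  rw [pd_boost hφ, pd_pd_comm hφ a.succ, pd_pd_comm hφ 0]
  ring

lemma sq_sub_sq_mul_pd_zero_pd_zero (hφ : ContDiff ℝ 2 φ) (p : Pt) :
    (p 0 ^ 2 - rad p ^ 2) * pd 0 (pd 0 φ) p
      = p 0 ^ 2 * negBox φ p + p 0 * (pd 1 (boost 0 φ) p + pd 2 (boost 1 φ) p)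
        - (p 1 * pd 0 (boost 0 φ) p + p 2 * pd 0 (boost 1 φ) p)
        + (p 1 * pd 1 φ p + p 2 * pd 2 φ p) - 2 * p 0 * pd 0 φ p := by
  have h10 := mul_pd_succ_pd hφ 0 0 p
  have h20 := mul_pd_succ_pd hφ 1 0 p
  have h11 := mul_pd_succ_pd hφ 0 1 p
  have h22 := mul_pd_succ_pd hφ 1 2 p
  simp only [Fin.succ_zero_eq_one, Fin.succ_one_eq_two, Pi.single_apply, Fin.reduceEq, if_true,
    if_false] at h10 h20 h11 h22
  rw [pd_pd_comm hφ 0 1] at h11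
  rw [pd_pd_comm hφ 0 2] at h22
  rw [negBox, rad_sq]
  linear_combination p 0 * h11 + p 0 * h22 - p 1 * h10 - p 2 * h20

end Calculus

def boostGradSum (φ : Pt → ℝ) (p : Pt) : ℝ :=
  (∑ a : Fin 2, ∑ γ : Fin 3, |pd γ (boost a φ) p|) + ∑ γ : Fin 3, |pd γ φ p|

def secondDerivBound (φ f : Pt → ℝ) (p : Pt) : ℝ :=
  (p 0 - rad p)⁻¹ * boostGradSum φ p + p 0 * (p 0 - rad p)⁻¹ * |f p|

section Bounds

variable {φ f : Pt → ℝ} {p : Pt}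

lemma boostGradSum_nonneg : 0 ≤ boostGradSum φ p := by
  unfold boostGradSum
  positivity

lemma sub_rad_mul_secondDerivBound (hp : rad p < p 0) :
    (p 0 - rad p) * secondDerivBound φ f p = boostGradSum φ p + p 0 * |f p| := by
  have : p 0 - rad p ≠ 0 := by linarith
  rw [secondDerivBound]
  field_simp

lemma secondDerivBound_nonneg (hp : rad p < p 0) : 0 ≤ secondDerivBound φ f p := by
  have hr : 0 ≤ rad p := rad_nonneg p
  have := sub_rad_mul_secondDerivBound (φ := φ) (f := f) hp
  refine nonneg_of_mul_nonneg_right (a := p 0 - rad p) ?_ (by linarith)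
  rw [this]
  exact add_nonneg boostGradSum_nonneg (mul_nonneg (by linarith) (abs_nonneg _))

lemma boostGradSum_le_mul_secondDerivBound (hp : rad p < p 0) :
    boostGradSum φ p ≤ p 0 * secondDerivBound φ f p := by
  have hr : 0 ≤ rad p := rad_nonneg p
  have hQ := secondDerivBound_nonneg (φ := φ) (f := f) hp
  have hS := sub_rad_mul_secondDerivBound (φ := φ) (f := f) hp
  nlinarith [abs_nonneg (f p), mul_nonneg hr hQ]

lemma abs_pd_boost_sub_le (a : Fin 2) (β : Fin 3) :
    |pd β (boost a φ) p
        - ((Pi.single β 1 : Pt) a.succ * pd 0 φ p + (Pi.single β 1 : Pt) 0 * pd a.succ φ p)|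
      ≤ boostGradSum φ p := by
  have hδ (i : Fin 3) (x : ℝ) : |(Pi.single β 1 : Pt) i * x| ≤ |x| := by
    rw [abs_mul]
    refine mul_le_of_le_one_left (abs_nonneg x) ?_
    rcases eq_or_ne i β with rfl | h <;> simp [*]
  have hA : |pd β (boost a φ) p| ≤ ∑ a : Fin 2, ∑ γ : Fin 3, |pd γ (boost a φ) p| :=
    (Finset.single_le_sum (fun γ _ ↦ abs_nonneg (pd γ (boost a φ) p)) (Finset.mem_univ β)).trans
      (Finset.single_le_sum (f := fun a ↦ ∑ γ : Fin 3, |pd γ (boost a φ) p|)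
        (fun _ _ ↦ Finset.sum_nonneg fun _ _ ↦ abs_nonneg _) (Finset.mem_univ a))
  have hb : |pd a.succ φ p| + |pd 0 φ p| ≤ ∑ γ : Fin 3, |pd γ φ p| := by
    rw [Fin.sum_univ_succ, add_comm]
    gcongr
    exact Finset.single_le_sum (fun γ _ ↦ abs_nonneg (pd (Fin.succ γ) φ p)) (Finset.mem_univ a)
  calc _ ≤ |pd β (boost a φ) p| + (|(Pi.single β 1 : Pt) a.succ * pd 0 φ p|
          + |(Pi.single β 1 : Pt) 0 * pd a.succ φ p|) :=
        (abs_sub _ _).trans (by gcongr; exact abs_add_le _ _)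
    _ ≤ boostGradSum φ p := by
      rw [boostGradSum]
      linarith [hδ a.succ (pd 0 φ p), hδ 0 (pd a.succ φ p)]

lemma abs_sq_sub_sq_mul_pd_zero_pd_zero_le (hφ : ContDiff ℝ 2 φ) (hp : rad p < p 0)
    (hf : negBox φ p = f p) :
    |(p 0 ^ 2 - rad p ^ 2) * pd 0 (pd 0 φ) p|
      ≤ p 0 ^ 2 * |f p| + 2 * p 0 * boostGradSum φ p := by
  have hr : 0 ≤ rad p := rad_nonneg p
  have ht : 0 ≤ p 0 := by linarith
  have hA := abs_mul_add_mul_le (u := pd 0 (boost 0 φ) p) (v := pd 0 (boost 1 φ) p)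
    (abs_le_rad p 0) (abs_le_rad p 1)
  have hb := abs_mul_add_mul_le (u := pd 1 φ p) (v := pd 2 φ p) (abs_le_rad p 0) (abs_le_rad p 1)
  simp only [Fin.succ_zero_eq_one, Fin.succ_one_eq_two] at hA hb
  set S₁ := |pd 0 (boost 0 φ) p| + |pd 0 (boost 1 φ) p| + |pd 1 φ p| + |pd 2 φ p|
  set S₂ := |pd 1 (boost 0 φ) p| + |pd 2 (boost 1 φ) p| + |pd 0 φ p|
  have hS : S₁ + S₂ ≤ boostGradSum φ p ∧ |pd 0 φ p| ≤ boostGradSum φ p := by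
    simp only [S₁, S₂, boostGradSum, Fin.sum_univ_succ, Fin.sum_univ_zero, Fin.succ_zero_eq_one,
      Fin.succ_one_eq_two]
    constructor <;> linarith [abs_nonneg (pd 0 (boost 0 φ) p), abs_nonneg (pd 1 (boost 0 φ) p),
      abs_nonneg (pd 2 (boost 0 φ) p), abs_nonneg (pd 0 (boost 1 φ) p),
      abs_nonneg (pd 1 (boost 1 φ) p), abs_nonneg (pd 2 (boost 1 φ) p),
      abs_nonneg (pd 1 φ p), abs_nonneg (pd 2 φ p)]
  rw [sq_sub_sq_mul_pd_zero_pd_zero hφ, hf]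
  set T₁ := p 0 ^ 2 * f p
  set T₂ := p 0 * (pd 1 (boost 0 φ) p + pd 2 (boost 1 φ) p)
  set T₃ := p 1 * pd 0 (boost 0 φ) p + p 2 * pd 0 (boost 1 φ) p
  set T₄ := p 1 * pd 1 φ p + p 2 * pd 2 φ p
  set T₅ := 2 * p 0 * pd 0 φ p
  have hT₁ : |T₁| = p 0 ^ 2 * |f p| := by rw [abs_mul, abs_of_nonneg (sq_nonneg _)]
  have hT₂ : |T₂| ≤ p 0 * (|pd 1 (boost 0 φ) p| + |pd 2 (boost 1 φ) p|) := by
    rw [abs_mul, abs_of_nonneg ht]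
    gcongr
    exact abs_add_le _ _
  have hT₅ : |T₅| = 2 * p 0 * |pd 0 φ p| := by
    rw [abs_mul, abs_mul, abs_two, abs_of_nonneg ht]
  have hT₃₄ : |T₃| + |T₄| ≤ p 0 * S₁ := by
    have : rad p * S₁ ≤ p 0 * S₁ := by gcongr
    linarith
  calc |T₁ + T₂ - T₃ + T₄ - T₅| ≤ |T₁| + |T₂| + |T₃| + |T₄| + |T₅| := by
        rw [abs_le]
        constructor <;> linarith [le_abs_self T₁, neg_abs_le T₁, le_abs_self T₂, neg_abs_le T₂,
          le_abs_self T₃, neg_abs_le T₃, le_abs_self T₄, neg_abs_le T₄, le_abs_self T₅,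
          neg_abs_le T₅]
    _ ≤ p 0 ^ 2 * |f p| + 2 * p 0 * boostGradSum φ p := by
        nlinarith [mul_le_mul_of_nonneg_left hS.1 ht, mul_le_mul_of_nonneg_left hS.2 ht]

lemma abs_pd_zero_pd_zero_le (hφ : ContDiff ℝ 2 φ) (hp : rad p < p 0)
    (hf : negBox φ p = f p) :
    |pd 0 (pd 0 φ) p| ≤ 2 * secondDerivBound φ f p := by
  have hr : 0 ≤ rad p := rad_nonneg p
  have hD : p 0 ^ 2 - rad p ^ 2 = (p 0 - rad p) * (p 0 + rad p) := by ring
  have hDpos : 0 < p 0 ^ 2 - rad p ^ 2 := by rw [hD]; exact mul_pos (by linarith) (by linarith)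
  have h := abs_sq_sub_sq_mul_pd_zero_pd_zero_le hφ hp hf
  rw [abs_mul, abs_of_pos hDpos] at h
  refine le_of_mul_le_mul_left (h.trans ?_) hDpos
  calc p 0 ^ 2 * |f p| + 2 * p 0 * boostGradSum φ p
      ≤ (p 0 + rad p) * (2 * (boostGradSum φ p + p 0 * |f p|)) := by
        have hS := boostGradSum_nonneg (φ := φ) (p := p)
        have ht : 0 ≤ p 0 := by linarith
        nlinarith [mul_nonneg hr hS, mul_nonneg (mul_nonneg ht ht) (abs_nonneg (f p)),
          mul_nonneg (mul_nonneg hr ht) (abs_nonneg (f p))]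
    _ = (p 0 ^ 2 - rad p ^ 2) * (2 * secondDerivBound φ f p) := by
        rw [← sub_rad_mul_secondDerivBound hp, hD]
        ring

lemma abs_pd_succ_pd_le (hφ : ContDiff ℝ 2 φ) (hp : rad p < p 0) {k : ℝ} (a : Fin 2)
    (β : Fin 3) (h0β : |pd 0 (pd β φ) p| ≤ k * secondDerivBound φ f p) :
    |pd a.succ (pd β φ) p| ≤ (k + 1) * secondDerivBound φ f p :=
  abs_le_add_one_mul_of_mul_eq_sub ((rad_nonneg p).trans_lt hp)
    (mul_pd_succ_pd hφ a β p) ((abs_le_rad p a).trans hp.le)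
    ((abs_pd_boost_sub_le a β).trans (boostGradSum_le_mul_secondDerivBound hp)) h0β

lemma abs_pd_zero_pd_le (hφ : ContDiff ℝ 2 φ) (hp : rad p < p 0) (hf : negBox φ p = f p)
    (β : Fin 3) : |pd 0 (pd β φ) p| ≤ 3 * secondDerivBound φ f p := by
  have h00 := abs_pd_zero_pd_zero_le hφ hp hf
  cases β using Fin.cases with
  | zero => linarith [secondDerivBound_nonneg (φ := φ) (f := f) hp]
  | succ a =>
    rw [pd_pd_comm hφ]
    linarith [abs_pd_succ_pd_le hφ hp a 0 h00]

lemma abs_pd_pd_le (hφ : ContDiff ℝ 2 φ) (hp : rad p < p 0) (hf : negBox φ p = f p)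
    (α β : Fin 3) : |pd α (pd β φ) p| ≤ 4 * secondDerivBound φ f p := by
  have h0β := abs_pd_zero_pd_le hφ hp hf β
  cases α using Fin.cases with
  | zero => linarith [secondDerivBound_nonneg (φ := φ) (f := f) hp]
  | succ a => linarith [abs_pd_succ_pd_le hφ hp a β h0β]

end Bounds

/-- **Pointwise bound on second derivatives of a wave field** (Lemma 4.9). If `φ` is a `C²`
function supported in the slab `K_{[s₀,s₁]}`, vanishing near the conical boundary, and
`−□φ = f` there, then for all `α, β ∈ {0,1,2}` and all points of the slab:
`|∂_α∂_βφ| ≤ C[(t−|x|)^{−1}(Σ|∂ L φ| + Σ|∂φ|) + t(t−|x|)^{−1}|f|]`. -/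
theorem second_derivative_pointwise_bound :
    ∃ C : ℝ, 0 < C ∧
      ∀ s0 s1 : ℝ, 1 < s0 → s0 ≤ s1 →
      ∀ φ f : Pt → ℝ,
        ContDiff ℝ 2 φ →
        (∀ p, p ∉ slab s0 s1 → φ p = 0) →
        VanishNearBdry s0 s1 φ →
        (∀ p ∈ slab s0 s1, negBox φ p = f p) →
        ∀ α β : Fin 3, ∀ p ∈ slab s0 s1,
          |pd α (pd β φ) p|
            ≤ C * ((p 0 - rad p)⁻¹ *
                  ((∑ a : Fin 2, ∑ γ : Fin 3, |pd γ (boost a φ) p|)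
                    + ∑ γ : Fin 3, |pd γ φ p|)
                + (p 0) * (p 0 - rad p)⁻¹ * |f p|) := by
  refine ⟨4, by norm_num, fun s0 s1 _ _ φ f hφ _ _ hwave α β p hp ↦ ?_⟩
  exact abs_pd_pd_le hφ (by linarith [hp.1]) (hwave p hp) α β
end
end

section
/- Nonlinear transformation removing the wave–Klein-Gordon product from the wave equation. Let w, v, F_v be smooth functions on an open subset of ℝ^{1+2} satisfying −□w = w v and −□v + v = F_v. Define W := w + w v. Then W satisfies the wave equation −□W = w v² + F_v w − 2 η^{αβ} ∂_α w ∂_β v, i.e. −□W = w v² + F_v w − 2 Q₀(w, v). -/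
noncomputable section

open MeasureTheory

/-!
`−□` obeys the Leibniz rule `−□(fg) = (−□f) g + f (−□g) − 2 Q₀(f, g)`. For `W = w + wv` this gives
`−□W = wv + wv² + w (F_v − v) − 2 Q₀(w, v)`: the mass term of the Klein-Gordon equation
cancels the product `wv` coming from `−□w`.
-/

open scoped Topology

/-- The null form `Q₀(f, g) = η^{αβ} ∂_α f ∂_β g`. -/
def nullQ0 (f g : Pt → ℝ) (p : Pt) : ℝ :=
  -(pd 0 f p * pd 0 g p) + pd 1 f p * pd 1 g p + pd 2 f p * pd 2 g p

section Leibniz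

variable {f g : Pt → ℝ} {p : Pt}

lemma pd_congr_of_eventuallyEq (h : f =ᶠ[𝓝 p] g) (i : Fin 3) : pd i f p = pd i g p := by
  rw [pd, pd, h.fderiv_eq]

lemma pd_add (hf : DifferentiableAt ℝ f p) (hg : DifferentiableAt ℝ g p) (i : Fin 3) :
    pd i (fun q => f q + g q) p = pd i f p + pd i g p := by
  simp [pd, fderiv_fun_add hf hg]

lemma pd_mul (hf : DifferentiableAt ℝ f p) (hg : DifferentiableAt ℝ g p) (i : Fin 3) :
    pd i (fun q => f q * g q) p = pd i f p * g p + f p * pd i g p := by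
  simp only [pd, fderiv_fun_mul hf hg, add_apply, smul_apply, smul_eq_mul]
  ring

lemma contDiffAt_pd {m n : WithTop ℕ∞} (hf : ContDiffAt ℝ n f p) (hmn : m + 1 ≤ n)
    (i : Fin 3) : ContDiffAt ℝ m (pd i f) p :=
  (hf.fderiv_right hmn).clm_apply contDiffAt_const

lemma differentiableAt_pd (hf : ContDiffAt ℝ 2 f p) (i : Fin 3) :
    DifferentiableAt ℝ (pd i f) p :=
  (contDiffAt_pd (m := 1) hf (by norm_num) i).differentiableAt one_ne_zero

lemma pd_pd_add (hf : ContDiffAt ℝ 2 f p) (hg : ContDiffAt ℝ 2 g p) (i : Fin 3) :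
    pd i (pd i (fun q => f q + g q)) p = pd i (pd i f) p + pd i (pd i g) p := by
  have h_pd : pd i (fun q => f q + g q) =ᶠ[𝓝 p] fun q => pd i f q + pd i g q := by
    filter_upwards [hf.eventually (by simp), hg.eventually (by simp)] with q hfq hgq
    exact pd_add (hfq.differentiableAt two_ne_zero) (hgq.differentiableAt two_ne_zero) i
  rw [pd_congr_of_eventuallyEq h_pd, pd_add (differentiableAt_pd hf i) (differentiableAt_pd hg i)]

lemma pd_pd_mul (hf : ContDiffAt ℝ 2 f p) (hg : ContDiffAt ℝ 2 g p) (i : Fin 3) :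
    pd i (pd i (fun q => f q * g q)) p
      = pd i (pd i f) p * g p + 2 * (pd i f p * pd i g p) + f p * pd i (pd i g) p := by
  have h_pd : pd i (fun q => f q * g q) =ᶠ[𝓝 p] fun q => pd i f q * g q + f q * pd i g q := by
    filter_upwards [hf.eventually (by simp), hg.eventually (by simp)] with q hfq hgq
    exact pd_mul (hfq.differentiableAt two_ne_zero) (hgq.differentiableAt two_ne_zero) i
  have hf₁ := hf.differentiableAt two_ne_zero
  have hg₁ := hg.differentiableAt two_ne_zero
  have hf₂ := differentiableAt_pd hf i
  have hg₂ := differentiableAt_pd hg i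
  rw [pd_congr_of_eventuallyEq h_pd, pd_add (hf₂.fun_mul hg₁) (hf₁.fun_mul hg₂), pd_mul hf₂ hg₁,
    pd_mul hf₁ hg₂]
  ring

lemma negBox_add (hf : ContDiffAt ℝ 2 f p) (hg : ContDiffAt ℝ 2 g p) :
    negBox (fun q => f q + g q) p = negBox f p + negBox g p := by
  simp only [negBox, pd_pd_add hf hg]
  ring

lemma negBox_mul (hf : ContDiffAt ℝ 2 f p) (hg : ContDiffAt ℝ 2 g p) :
    negBox (fun q => f q * g q) p = negBox f p * g p + f p * negBox g p - 2 * nullQ0 f g p := by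
  simp only [negBox, nullQ0, pd_pd_mul hf hg]
  ring

end Leibniz

theorem wave_KleinGordon_transformation_general
    (U : Set Pt) (hU : IsOpen U)
    (w v Fv : Pt → ℝ)
    (hw : ContDiffOn ℝ (⊤ : ℕ∞) w U) (hv : ContDiffOn ℝ (⊤ : ℕ∞) v U)
    (heqw : ∀ p ∈ U, negBox w p = w p * v p)
    (heqv : ∀ p ∈ U, negBox v p + v p = Fv p) :
    ∀ p ∈ U,
      negBox (fun q => w q + w q * v q) p
        = w p * (v p)^2 + Fv p * w p
          - 2 * (-(pd 0 w p * pd 0 v p) + pd 1 w p * pd 1 v p + pd 2 w p * pd 2 v p) := by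
  intro p hp
  have hw₂ : ContDiffAt ℝ 2 w p := (hw.contDiffAt (hU.mem_nhds hp)).of_le (by norm_cast)
  have hv₂ : ContDiffAt ℝ 2 v p := (hv.contDiffAt (hU.mem_nhds hp)).of_le (by norm_cast)
  rw [negBox_add hw₂ (hw₂.mul hv₂), negBox_mul hw₂ hv₂, heqw p hp, ← heqv p hp, nullQ0]
  ring

/-- **Nonlinear transformation removing the wave–Klein-Gordon product from the wave
equation** (Example 3.2). If `−□w = wv` and `−□v + v = F_v` on an open set `U`, then
`W := w + wv` solves `−□W = wv² + F_v w − 2Q₀(w,v)` on `U`, where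
`Q₀(w,v) = −∂_tw ∂_tv + Σ_a ∂_aw ∂_av`. -/
theorem wave_KleinGordon_transformation
    (U : Set Pt) (hU : IsOpen U)
    (w v Fv : Pt → ℝ)
    (hw : ContDiffOn ℝ (⊤ : ℕ∞) w U) (hv : ContDiffOn ℝ (⊤ : ℕ∞) v U)
    (hFv : ContDiffOn ℝ (⊤ : ℕ∞) Fv U)
    (heqw : ∀ p ∈ U, negBox w p = w p * v p)
    (heqv : ∀ p ∈ U, negBox v p + v p = Fv p) :
    ∀ p ∈ U,
      negBox (fun q => w q + w q * v q) p
        = w p * (v p)^2 + Fv p * w p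
          - 2 * (-(pd 0 w p * pd 0 v p) + pd 1 w p * pd 1 v p + pd 2 w p * pd 2 v p) :=
  wave_KleinGordon_transformation_general U hU w v Fv hw hv heqw heqv
end
end
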